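/- (Jacobi triple product / theta function expansion) For a nonzero complex z and q with 0 < |q| < 1: (z;q)_∞ (q/z;q)_∞ (q;q)_∞ = ∑_{n=-∞}^{∞} (-1)^n q^{n(n-1)/2} z^n. -/

import Mathlib

/-!
Multiplying the finite product `∏_{k<M} (1 - z q^k) ∏_{k<L} (1 - q^{k+1}/z)` by one more factor
is exactly a `q`-Pascal rule on its coefficients, so it equals
`∑_n [M+L, L+n]_q (-1)^n q^{n(n-1)/2} z^n`. For `M = L = N`, after multiplying by `(q;q)_{2N}`
the `n`-th coefficient is `(q;q)_{2N}^2 / ((q;q)_{N+n} (q;q)_{N-n})`. As `(q;q)_m` converges to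
`(q;q)_∞ ≠ 0`, these coefficients are bounded uniformly in `N` and `n` and tend to `1`; since the
theta series converges absolutely, Tannery's theorem lets `N → ∞`.
-/

open Finset Filter Topology

namespace JacobiTripleProduct

section Field

variable {K : Type*} [Field K] {q z : K}

def qPoch (q : K) (m : ℕ) : K := ∏ j ∈ range m, (1 - q ^ (j + 1))

theorem qPoch_succ (q : K) (m : ℕ) : qPoch q (m + 1) = qPoch q m * (1 - q ^ (m + 1)) :=
  prod_range_succ _ m

/-- `1 / (q;q)_k`, extended by zero to negative `k` (where `(q;q)_k` has a pole): this makes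
`invQPoch_eq_one_sub_mul` and hence the `q`-Pascal rules hold for every integer `k`. -/
def invQPoch (q : K) (k : ℤ) : K := if 0 ≤ k then (qPoch q k.toNat)⁻¹ else 0

theorem invQPoch_eq_one_sub_mul (hq : ∀ j : ℕ, q ^ (j + 1) ≠ 1) (k : ℤ) :
    invQPoch q k = (1 - q ^ (k + 1)) * invQPoch q (k + 1) := by
  rcases lt_trichotomy k (-1) with hk | rfl | hk
  · simp [invQPoch, show ¬ 0 ≤ k by omega, show ¬ 0 ≤ k + 1 by omega]
  · simp [invQPoch]
  · lift k to ℕ using (by omega)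
    have hne : (1 : K) - q ^ (k + 1) ≠ 0 := sub_ne_zero.2 (hq k).symm
    simp only [invQPoch, Nat.cast_nonneg, if_true, show (0 : ℤ) ≤ k + 1 by omega,
      Int.toNat_natCast, show ((k : ℤ) + 1).toNat = k + 1 by omega, qPoch_succ,
      show q ^ ((k : ℤ) + 1) = q ^ (k + 1) by norm_cast]
    field_simp

def qBinom (q : K) (m : ℕ) (k : ℤ) : K := qPoch q m * invQPoch q k * invQPoch q (m - k)

theorem qBinom_zero (n : ℤ) : qBinom q 0 n = if n = 0 then 1 else 0 := by
  rcases lt_trichotomy n 0 with hn | rfl | hn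
  · simp [qBinom, invQPoch, show ¬ 0 ≤ n by omega, hn.ne]
  · simp [qBinom, invQPoch, qPoch]
  · simp [qBinom, invQPoch, show ¬ n ≤ 0 by omega, hn.ne']

theorem qBinom_symm (m : ℕ) (k : ℤ) : qBinom q m (m - k) = qBinom q m k := by
  rw [qBinom, qBinom, sub_sub_cancel, mul_right_comm]

def thetaTerm (q z : K) (n : ℤ) : K := (-1) ^ n * q ^ ((n * (n - 1)) / 2) * z ^ n

theorem thetaTerm_zero : thetaTerm q z 0 = 1 := by simp [thetaTerm]

theorem thetaTerm_add_one (hq0 : q ≠ 0) (hz : z ≠ 0) (n : ℤ) :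
    thetaTerm q z (n + 1) = -(q ^ n * z) * thetaTerm q z n := by
  have hexp : (n + 1) * (n + 1 - 1) / 2 = n * (n - 1) / 2 + n := by
    rw [show (n + 1) * (n + 1 - 1) = n * (n - 1) + n * 2 by ring,
      Int.add_mul_ediv_right _ _ two_ne_zero]
  rw [thetaTerm, thetaTerm, hexp, zpow_add₀ hq0, zpow_add_one₀ (neg_ne_zero.2 one_ne_zero),
    zpow_add_one₀ hz]
  ring

theorem thetaTerm_one_sub (hz : z ≠ 0) (n : ℤ) :
    thetaTerm q z (1 - n) = -z * thetaTerm q z⁻¹ n := by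
  rw [thetaTerm, thetaTerm, show (1 - n) * (1 - n - 1) = n * (n - 1) by ring,
    zpow_sub₀ hz, zpow_sub₀ (neg_ne_zero.2 one_ne_zero), div_eq_mul_inv ((-1 : K) ^ (1 : ℤ)),
    ← inv_zpow (-1 : K), inv_neg, inv_one, inv_zpow, zpow_one, zpow_one]
  ring

variable (hq0 : q ≠ 0) (hq : ∀ j : ℕ, q ^ (j + 1) ≠ 1)
include hq0 hq

theorem qBinom_succ (m : ℕ) (k : ℤ) :
    qBinom q (m + 1) k = qBinom q m (k - 1) + q ^ k * qBinom q m k := by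
  set j : ℤ := (m + 1 : ℕ) - k
  have hpow : q ^ k * q ^ j = q ^ (m + 1) := by
    rw [← zpow_natCast, ← zpow_add₀ hq0]; congr 1; omega
  have hk := invQPoch_eq_one_sub_mul hq (k - 1)
  have hj := invQPoch_eq_one_sub_mul hq (j - 1)
  rw [sub_add_cancel] at hk hj
  simp only [qBinom, qPoch_succ, show (m : ℤ) - (k - 1) = j by omega,
    show (m : ℤ) - k = j - 1 by omega, hk, hj]
  linear_combination qPoch q m * invQPoch q k * invQPoch q j * hpow

theorem qBinom_succ' (m : ℕ) (k : ℤ) :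
    qBinom q (m + 1) k = q ^ ((m + 1 : ℕ) - k) * qBinom q m (k - 1) + qBinom q m k := by
  rw [← qBinom_symm, qBinom_succ hq0 hq, add_comm, ← qBinom_symm m k, ← qBinom_symm m (k - 1)]
  push_cast
  ring_nf

variable [TopologicalSpace K] [IsTopologicalSemiring K] (hz : z ≠ 0)
include hz

theorem hasSum_qBinom_succ_mul_thetaTerm {m : ℕ} {L : ℤ} {P : K}
    (h : HasSum (fun n ↦ qBinom q m (L + n) * thetaTerm q z n) P) :
    HasSum (fun n ↦ qBinom q (m + 1) (L + n) * thetaTerm q z n)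
      (P * (1 - z * q ^ ((m : ℤ) - L))) := by
  have hshift := (Equiv.subRight (1 : ℤ)).hasSum_iff.2 (h.mul_right (-(z * q ^ ((m : ℤ) - L))))
  rw [mul_one_sub, sub_eq_add_neg, ← mul_neg]
  refine (h.add hshift).congr_fun fun n ↦ ?_
  have hpow : q ^ ((m + 1 : ℕ) - (L + n)) * q ^ (n - 1) = q ^ ((m : ℤ) - L) := by
    rw [← zpow_add₀ hq0]; congr 1; push_cast; ring
  have hterm := thetaTerm_add_one hq0 hz (n - 1)
  rw [sub_add_cancel] at hterm
  simp only [Function.comp_apply, Equiv.subRight_apply, qBinom_succ' hq0 hq,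
    show L + (n - 1) = L + n - 1 by ring, hterm]
  linear_combination (-(z * qBinom q m (L + n - 1) * thetaTerm q z (n - 1))) * hpow

theorem hasSum_qBinom_succ_add_one_mul_thetaTerm {m : ℕ} {L : ℤ} {P : K}
    (h : HasSum (fun n ↦ qBinom q m (L + n) * thetaTerm q z n) P) :
    HasSum (fun n ↦ qBinom q (m + 1) (L + 1 + n) * thetaTerm q z n)
      (P * (1 - q / z * q ^ L)) := by
  have hshift := (Equiv.addRight (1 : ℤ)).hasSum_iff.2 (h.mul_right (-(q / z * q ^ L)))
  rw [mul_one_sub, sub_eq_add_neg, ← mul_neg]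
  refine (h.add hshift).congr_fun fun n ↦ ?_
  have hpow : q ^ n * z * (q / z * q ^ L) = q ^ (L + 1 + n) := by
    rw [show L + 1 + n = n + 1 + L by ring, zpow_add₀ hq0, zpow_add_one₀ hq0]
    field_simp
  simp only [Function.comp_apply, Equiv.coe_addRight, qBinom_succ hq0 hq,
    show L + (n + 1) = L + 1 + n by ring, show L + 1 + n - 1 = L + n by ring,
    thetaTerm_add_one hq0 hz]
  linear_combination (-(qBinom q m (L + 1 + n) * thetaTerm q z n)) * hpow

theorem hasSum_qBinom_mul_thetaTerm (M L : ℕ) :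
    HasSum (fun n ↦ qBinom q (M + L) (L + n) * thetaTerm q z n)
      ((∏ k ∈ range M, (1 - z * q ^ k)) * ∏ k ∈ range L, (1 - q / z * q ^ k)) := by
  induction M with
  | zero =>
    induction L with
    | zero =>
      have hsingle : ∀ n ≠ 0, qBinom q 0 n * thetaTerm q z n = 0 := fun n hn ↦ by
        simp [qBinom_zero, hn]
      simpa [qBinom_zero, thetaTerm_zero] using hasSum_single 0 hsingle
    | succ L ih =>
      simpa [prod_range_succ, ← mul_assoc] using
        hasSum_qBinom_succ_add_one_mul_thetaTerm hq0 hq hz ih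
  | succ M ih =>
    have hstep := hasSum_qBinom_succ_mul_thetaTerm hq0 hq hz ih
    rw [show (((M + L : ℕ) : ℤ) - L) = M by push_cast; ring, zpow_natCast] at hstep
    rw [Nat.succ_add, prod_range_succ, mul_right_comm]
    exact hstep

end Field

section NormedField

variable {𝕜 : Type*} [NormedField 𝕜] {q z : 𝕜}

theorem pow_succ_ne_one (hq : ‖q‖ < 1) (j : ℕ) : q ^ (j + 1) ≠ 1 := fun h ↦
  (pow_lt_one₀ (norm_nonneg q) hq (Nat.succ_ne_zero j)).ne (by rw [← norm_pow, h, norm_one])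

theorem summable_norm_thetaTerm_nat (hq0 : q ≠ 0) (hz : z ≠ 0) (hq : ‖q‖ < 1) :
    Summable fun n : ℕ ↦ ‖thetaTerm q z n‖ := by
  refine summable_of_ratio_norm_eventually_le (r := 1 / 2) (by norm_num) ?_
  have hsmall : Tendsto (fun n : ℕ ↦ ‖q‖ ^ n * ‖z‖) atTop (𝓝 0) := by
    simpa using (tendsto_pow_atTop_nhds_zero_of_lt_one (norm_nonneg q) hq).mul_const ‖z‖
  filter_upwards [hsmall.eventually_le_const (by norm_num : (0 : ℝ) < 1 / 2)] with n hn
  rw [norm_norm, norm_norm, Nat.cast_succ, thetaTerm_add_one hq0 hz, norm_mul, norm_neg, norm_mul,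
    norm_zpow, zpow_natCast]
  exact mul_le_mul_of_nonneg_right hn (norm_nonneg _)

theorem summable_norm_thetaTerm (hq0 : q ≠ 0) (hz : z ≠ 0) (hq : ‖q‖ < 1) :
    Summable fun n : ℤ ↦ ‖thetaTerm q z n‖ := by
  refine .of_nat_of_neg (summable_norm_thetaTerm_nat hq0 hz hq) ?_
  refine (((summable_nat_add_iff 1).2
    (summable_norm_thetaTerm_nat hq0 (inv_ne_zero hz) hq)).mul_left ‖z‖).congr fun n ↦ ?_
  rw [show -(n : ℤ) = 1 - ((n + 1 : ℕ) : ℤ) by push_cast; ring, thetaTerm_one_sub hz, norm_mul,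
    norm_neg]

variable [CompleteSpace 𝕜]

theorem multipliable_one_sub_mul_pow (w : 𝕜) (hq : ‖q‖ < 1) :
    Multipliable fun k : ℕ ↦ 1 - w * q ^ k := by
  simpa [sub_eq_add_neg] using multipliable_one_add_of_summable (f := fun k : ℕ ↦ -(w * q ^ k))
    (by simpa using (summable_geometric_of_lt_one (norm_nonneg q) hq).mul_left ‖w‖)

theorem tprod_one_sub_pow_succ_ne_zero (hq : ‖q‖ < 1) : ∏' k : ℕ, (1 - q ^ (k + 1)) ≠ 0 := by
  simpa [sub_eq_add_neg] using tprod_one_add_ne_zero_of_summable (f := fun k : ℕ ↦ -q ^ (k + 1))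
    (fun k ↦ by simpa [← sub_eq_add_neg, sub_eq_zero] using (pow_succ_ne_one hq k).symm)
    (by simpa [pow_succ] using (summable_geometric_of_lt_one (norm_nonneg q) hq).mul_right ‖q‖)

theorem tendsto_qPoch (hq : ‖q‖ < 1) :
    Tendsto (qPoch q) atTop (𝓝 (∏' k : ℕ, (1 - q ^ (k + 1)))) := by
  have := (multipliable_one_sub_mul_pow q hq).tendsto_prod_tprod_nat
  simp only [← pow_succ'] at this
  exact this

theorem tendsto_qPoch_add_self (hq : ‖q‖ < 1) :
    Tendsto (fun N : ℕ ↦ qPoch q (N + N)) atTop (𝓝 (∏' k : ℕ, (1 - q ^ (k + 1)))) :=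
  (tendsto_qPoch hq).comp (tendsto_atTop_atTop.2 fun m ↦ ⟨m, fun N hN ↦ by omega⟩)

theorem tendsto_invQPoch (hq : ‖q‖ < 1) :
    Tendsto (invQPoch q) atTop (𝓝 (∏' k : ℕ, (1 - q ^ (k + 1)))⁻¹) := by
  have htoNat : Tendsto Int.toNat atTop atTop :=
    tendsto_atTop_atTop.2 fun m ↦ ⟨m, fun k hk ↦ by omega⟩
  refine (((tendsto_qPoch hq).comp htoNat).inv₀ (tprod_one_sub_pow_succ_ne_zero hq)).congr' ?_
  filter_upwards [eventually_ge_atTop 0] with k hk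
  simp [invQPoch, hk]

theorem tendsto_qPoch_mul_qBinom (hq : ‖q‖ < 1) (n : ℤ) :
    Tendsto (fun N : ℕ ↦ qPoch q (N + N) * qBinom q (N + N) (N + n)) atTop (𝓝 1) := by
  have hQ := tendsto_qPoch_add_self hq
  have hI (s : ℤ) := (tendsto_invQPoch hq).comp
    (tendsto_atTop_add_const_right _ s (tendsto_natCast_atTop_atTop (R := ℤ)))
  have hlim := ((hQ.mul hQ).mul (hI n)).mul (hI (-n))
  have hQ0 := tprod_one_sub_pow_succ_ne_zero hq
  set Q := ∏' k : ℕ, (1 - q ^ (k + 1))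
  rw [show Q * Q * Q⁻¹ * Q⁻¹ = 1 by field_simp] at hlim
  refine hlim.congr fun N ↦ ?_
  simp only [Function.comp_apply, qBinom,
    show ((N + N : ℕ) : ℤ) - (N + n) = N + -n by push_cast; ring]
  ring

theorem exists_norm_qPoch_mul_qBinom_le (hq : ‖q‖ < 1) :
    ∃ C, ∀ (N : ℕ) (n : ℤ), ‖qPoch q (N + N) * qBinom q (N + N) (N + n)‖ ≤ C := by
  obtain ⟨A, hA⟩ := (tendsto_qPoch hq).norm.bddAbove_range
  obtain ⟨B, hB⟩ :=
    ((tendsto_qPoch hq).inv₀ (tprod_one_sub_pow_succ_ne_zero hq)).norm.bddAbove_range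
  have hA' (m : ℕ) : ‖qPoch q m‖ ≤ A := hA ⟨m, rfl⟩
  have hB' (k : ℤ) : ‖invQPoch q k‖ ≤ B := by
    by_cases hk : 0 ≤ k
    · simpa [invQPoch, hk] using hB ⟨k.toNat, rfl⟩
    · simpa [invQPoch, hk] using (norm_nonneg _).trans (hB ⟨0, rfl⟩)
  have hA0 : 0 ≤ A := (norm_nonneg _).trans (hA' 0)
  have hB0 : 0 ≤ B := (norm_nonneg _).trans (hB' 0)
  refine ⟨A * (A * B * B), fun N n ↦ ?_⟩
  simp only [qBinom, norm_mul]
  gcongr <;> first | exact hA' _ | exact hB' _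

theorem tendsto_prod_mul_qPoch (hq0 : q ≠ 0) (hz : z ≠ 0) (hq : ‖q‖ < 1) :
    Tendsto (fun N : ℕ ↦ (∏ k ∈ range N, (1 - z * q ^ k)) *
      (∏ k ∈ range N, (1 - q / z * q ^ k)) * qPoch q (N + N))
      atTop (𝓝 (∑' n : ℤ, thetaTerm q z n)) := by
  obtain ⟨C, hC⟩ := exists_norm_qPoch_mul_qBinom_le hq
  have hlim := tendsto_tsum_of_dominated_convergence
    ((summable_norm_thetaTerm hq0 hz hq).mul_left C)
    (fun n ↦ by simpa using (tendsto_qPoch_mul_qBinom hq n).mul_const (thetaTerm q z n))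
    (Eventually.of_forall fun N n ↦ by
      rw [norm_mul]; exact mul_le_mul_of_nonneg_right (hC N n) (norm_nonneg _))
  refine hlim.congr fun N ↦ ?_
  rw [mul_comm _ (qPoch q (N + N)), ← ((hasSum_qBinom_mul_thetaTerm hq0 (pow_succ_ne_one hq) hz
    N N).mul_left (qPoch q (N + N))).tsum_eq]
  simp only [mul_assoc]

end NormedField

end JacobiTripleProduct

open JacobiTripleProduct

theorem jacobi_triple_product (z q : ℂ) (hz : z ≠ 0) (hq0 : q ≠ 0)
    (hq : ‖q‖ < 1) :
    (∏' k : ℕ, (1 - z * q ^ k)) * (∏' k : ℕ, (1 - (q / z) * q ^ k)) *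
        (∏' k : ℕ, (1 - q * q ^ k)) =
      ∑' n : ℤ, (-1) ^ n * q ^ ((n * (n - 1)) / 2) * z ^ n := by
  have hprod := ((multipliable_one_sub_mul_pow z hq).tendsto_prod_tprod_nat.mul
    (multipliable_one_sub_mul_pow (q / z) hq).tendsto_prod_tprod_nat).mul
    (tendsto_qPoch_add_self hq)
  simp_rw [← pow_succ']
  exact tendsto_nhds_unique hprod (tendsto_prod_mul_qPoch hq0 hz hq)
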